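/- For all natural numbers n and m, and every real r > 0, the Stirling number of the second kind admits the contour-integral representation S(n+m, n) = ((n+m)!/n!) · (1/(2πi)) ∮_{|z|=r} (e^z − 1)^n · z^{−(n+m+1)} dz, where the integral is over the circle of radius r centered at 0, traversed counterclockwise, and e^z is the complex exponential. -/

import Mathlib

/-!
With `N = n + m`, Cauchy's formula identifies `(2πi)⁻¹ ∮ (e^z - 1)^n z^(-(N+1)) dz` with
`N!⁻¹` times the `N`-th derivative of `(e^z - 1)^n` at `0`, which by the binomial theorem is
`∑ₖ (-1)^k C(n,k) (n-k)^N`. By inclusion–exclusion this alternating sum counts the surjections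
`Fin N → Fin n`; a surjection is a partition into `n` blocks (its fibres) together with a
bijective labelling of the blocks, so there are `n! S(N, n)` of them.
-/

open Nat

/-- Stirling number of the second kind: the number of partitions of an
`n`-element set into `k` nonempty blocks. -/
noncomputable def stirling2 (n k : ℕ) : ℕ :=
  Nat.card {P : Finpartition (Finset.univ : Finset (Fin n)) // P.parts.card = k}

open Finset Function

namespace Finpartition

variable {α β : Type*} [DecidableEq α]

theorem parts_eq_image_part {s : Finset α} (P : Finpartition s) : P.parts = s.image P.part := by
  ext t
  refine ⟨fun ht ↦ ?_, fun ht ↦ ?_⟩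
  · obtain ⟨a, ha, rfl⟩ := P.part_surjOn ht
    exact mem_image_of_mem _ ha
  · obtain ⟨a, ha, rfl⟩ := mem_image.1 ht
    exact P.part_mem.2 ha

theorem ext_part {s : Finset α} {P Q : Finpartition s} (h : P.part = Q.part) : P = Q :=
  Finpartition.ext <| by rw [parts_eq_image_part, parts_eq_image_part, h]

variable [Fintype α] (P : Finpartition (univ : Finset α))

def toParts (a : α) : P.parts := ⟨P.part a, P.part_mem.2 (mem_univ a)⟩

theorem toParts_eq_iff {a : α} {t : P.parts} : P.toParts a = t ↔ a ∈ t.1 :=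
  Subtype.ext_iff.trans (P.part_eq_iff_mem t.2)

theorem toParts_eq_toParts_iff {a b : α} : P.toParts a = P.toParts b ↔ b ∈ P.part a :=
  eq_comm.trans <| Subtype.ext_iff.trans
    (P.mem_part_iff_part_eq_part (mem_univ _) (mem_univ _)).symm

theorem toParts_surjective : Surjective P.toParts := fun t ↦
  let ⟨a, ha⟩ := P.nonempty_of_mem_parts t.2
  ⟨a, P.toParts_eq_iff.2 ha⟩

variable [DecidableEq β]

def ofFibers (f : α → β) : Finpartition (univ : Finset α) := ofSetoid (Setoid.ker f)

theorem mem_part_ofFibers {f : α → β} {a b : α} : b ∈ (ofFibers f).part a ↔ f a = f b :=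
  mem_part_ofSetoid_iff_rel

theorem ofFibers_comp_toParts (e : P.parts ≃ β) : ofFibers (e ∘ P.toParts) = P := by
  refine ext_part <| funext fun a ↦ Finset.ext fun b ↦ ?_
  rw [mem_part_ofFibers, comp_apply, comp_apply, e.apply_eq_iff_eq, toParts_eq_toParts_iff]

theorem exists_equiv_comp_toParts_eq {f : α → β} (hf : Surjective f) (hP : ofFibers f = P) :
    ∃ e : P.parts ≃ β, e ∘ P.toParts = f := by
  have hfib {a b : α} : P.toParts a = P.toParts b ↔ f a = f b := by
    rw [toParts_eq_toParts_iff, ← hP, mem_part_ofFibers]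
  set g : P.parts → β := f ∘ surjInv P.toParts_surjective
  have hg : g ∘ P.toParts = f :=
    funext fun a ↦ hfib.1 (surjInv_eq P.toParts_surjective (P.toParts a))
  have hbij : Bijective g := by
    refine ⟨fun t u htu ↦ ?_, (hg.symm ▸ hf).of_comp⟩
    rw [← surjInv_eq P.toParts_surjective t, ← surjInv_eq P.toParts_surjective u]
    exact hfib.2 htu
  exact ⟨Equiv.ofBijective g hbij, hg⟩

end Finpartition

section Surjections

variable (α β : Type*) [Fintype α] [DecidableEq α] [Fintype β] [DecidableEq β]

open Finpartition in
theorem Fintype.card_surjective_eq_card_finpartition_mul_factorial :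
    Fintype.card {f : α → β // Surjective f} =
      Fintype.card {P : Finpartition (univ : Finset α) // #P.parts = Fintype.card β} *
        (Fintype.card β)! := by
  have hcard {f : α → β} (hf : Surjective f) : #(ofFibers f).parts = Fintype.card β := by
    obtain ⟨e, -⟩ := exists_equiv_comp_toParts_eq _ hf rfl
    rw [← Fintype.card_coe, Fintype.card_congr e]
  let Φ (f : {f : α → β // Surjective f}) :
      {P : Finpartition (univ : Finset α) // #P.parts = Fintype.card β} :=
    ⟨ofFibers f.1, hcard f.2⟩
  have hfiber (P : {P : Finpartition (univ : Finset α) // #P.parts = Fintype.card β}) :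
      Fintype.card {f // Φ f = P} = (Fintype.card β)! := by
    let label (e : P.1.parts ≃ β) : {f // Φ f = P} :=
      ⟨⟨e ∘ P.1.toParts, e.surjective.comp P.1.toParts_surjective⟩,
        Subtype.ext (ofFibers_comp_toParts P.1 e)⟩
    have hlabel : Bijective label := by
      refine ⟨fun e e' h ↦ Equiv.ext <| congrFun <| P.1.toParts_surjective.injective_comp_right
        (congrArg (·.1.1) h), fun ⟨⟨f, hf⟩, hP⟩ ↦ ?_⟩
      obtain ⟨e, he⟩ := exists_equiv_comp_toParts_eq P.1 hf (congrArg Subtype.val hP)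
      exact ⟨e, by simp only [label, he]⟩
    rw [← Fintype.card_congr (Equiv.ofBijective label hlabel), Fintype.card_equiv
      (Fintype.equivOfCardEq (by rw [Fintype.card_coe, P.2])), Fintype.card_coe, P.2]
  rw [← Fintype.card_congr (Equiv.sigmaFiberEquiv Φ), Fintype.card_sigma]
  simp only [hfiber, sum_const, Finset.card_univ, smul_eq_mul]

theorem Fintype.card_surjective_eq_sum :
    (Fintype.card {f : α → β // Surjective f} : ℤ) =
      ∑ k ∈ range (Fintype.card β + 1),
        (-1) ^ k * (Fintype.card β).choose k * ((Fintype.card β - k : ℕ) : ℤ) ^ Fintype.card α := by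
  let missing (b : β) : Finset (α → β) := {f | ∀ a, f a ≠ b}
  have hsurj : univ.inf (fun b ↦ (missing b)ᶜ) = ({f | Surjective f} : Finset (α → β)) := by
    ext f
    rw [mem_filter]
    simp [missing, mem_inf, Surjective]
  have hmissing (t : Finset β) : t.inf missing = Fintype.piFinset fun _ ↦ tᶜ := by
    ext f
    simp only [missing, mem_inf, mem_filter, mem_univ, true_and, Fintype.mem_piFinset, mem_compl]
    exact ⟨fun h a ha ↦ h _ ha a rfl, fun h b hb a hab ↦ h a (hab ▸ hb)⟩
  rw [Fintype.card_subtype, ← hsurj, inclusion_exclusion_card_inf_compl]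
  simp only [hmissing, Fintype.card_piFinset, prod_const, card_compl, Finset.card_univ,
    Nat.cast_pow]
  rw [sum_powerset_apply_card (fun k ↦ (-1) ^ k * ((Fintype.card β - k : ℕ) : ℤ) ^ Fintype.card α)]
  simp only [Finset.card_univ, nsmul_eq_mul, mul_assoc, mul_left_comm]

end Surjections

section Analysis

open Complex Metric
open scoped Real

theorem iteratedDeriv_fun_finsetSum {𝕜 F ι : Type*} [NontriviallyNormedField 𝕜]
    [NormedAddCommGroup F] [NormedSpace 𝕜 F] {s : Finset ι} {f : ι → 𝕜 → F} {N : ℕ} {x : 𝕜}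
    (h : ∀ i ∈ s, ContDiffAt 𝕜 N (f i) x) :
    iteratedDeriv N (fun y ↦ ∑ i ∈ s, f i y) x = ∑ i ∈ s, iteratedDeriv N (f i) x := by
  simp only [iteratedDeriv_eq_iteratedFDeriv, iteratedFDeriv_fun_sum_apply h,
    _root_.sum_apply]

theorem iteratedDeriv_cexp_sub_one_pow_zero (n N : ℕ) :
    iteratedDeriv N (fun z : ℂ ↦ (exp z - 1) ^ n) 0 =
      ∑ k ∈ range (n + 1), (-1) ^ k * n.choose k * ((n - k : ℕ) : ℂ) ^ N := by
  have hexpand : (fun z : ℂ ↦ (exp z - 1) ^ n) =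
      fun z ↦ ∑ k ∈ range (n + 1), (-1 : ℂ) ^ k * n.choose k * exp ((n - k : ℕ) * z) := by
    funext z
    rw [sub_eq_neg_add, add_pow]
    refine sum_congr rfl fun k _ ↦ ?_
    rw [← exp_nat_mul]
    ring
  rw [hexpand, iteratedDeriv_fun_finsetSum fun k _ ↦ by fun_prop]
  simp

theorem circleIntegral_mul_sub_zpow_neg_succ {f : ℂ → ℂ} {c : ℂ} {R : ℝ} (hR : 0 < R) (N : ℕ)
    (hf : DifferentiableOn ℂ f (closedBall c R)) :
    ∮ z in C(c, R), f z * (z - c) ^ (-((N : ℤ) + 1)) = 2 * π * I / N ! * iteratedDeriv N f c := by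
  rw [← smul_eq_mul (2 * π * I / N !), ← hf.circleIntegral_one_div_sub_center_pow_smul hR N]
  congr 1 with z
  rw [smul_eq_mul, mul_comm, one_div, ← zpow_natCast, ← zpow_neg]
  push_cast
  rfl

end Analysis

theorem stirling2_mul_factorial (N n : ℕ) :
    (stirling2 N n * n ! : ℤ) =
      ∑ k ∈ range (n + 1), (-1) ^ k * n.choose k * ((n - k : ℕ) : ℤ) ^ N := by
  have h := Fintype.card_surjective_eq_sum (Fin N) (Fin n)
  rw [Fintype.card_surjective_eq_card_finpartition_mul_factorial] at h
  simpa [stirling2, Nat.card_eq_fintype_card] using h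

/-- Saddle-point type contour-integral representation:
`S(n+m, n) = ((n+m)!/n!) · (1/(2πi)) ∮_{|z|=r} (e^z − 1)^n z^{−(n+m+1)} dz`
for every radius `r > 0`. -/
theorem stirling2_circleIntegral_exp (n m : ℕ) (r : ℝ) (hr : 0 < r) :
    (stirling2 (n + m) n : ℂ) =
      (((n + m)! : ℂ) / (n ! : ℂ)) * (2 * Real.pi * Complex.I)⁻¹ *
        ∮ z in C(0, r), (Complex.exp z - 1) ^ n * z ^ (-((n : ℤ) + m + 1)) := by
  have hderiv : (stirling2 (n + m) n * n ! : ℂ) =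
      iteratedDeriv (n + m) (fun z ↦ (Complex.exp z - 1) ^ n) 0 := by
    rw [iteratedDeriv_cexp_sub_one_pow_zero]
    exact_mod_cast stirling2_mul_factorial (n + m) n
  have hcauchy := circleIntegral_mul_sub_zpow_neg_succ hr (n + m) (c := 0)
    (f := fun z ↦ (Complex.exp z - 1) ^ n) (by fun_prop)
  simp only [sub_zero, Nat.cast_add] at hcauchy
  rw [hcauchy, ← hderiv]
  have hN : ((n + m)! : ℂ) ≠ 0 := Nat.cast_ne_zero.2 (factorial_ne_zero _)
  have hn : (n ! : ℂ) ≠ 0 := Nat.cast_ne_zero.2 (factorial_ne_zero _)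
  field_simp
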